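/- If g approximates exp(-Φ/2) in the weighted L² norm with error at most ε, i.e., ∫(exp(-Φ(x)/2) - g(x))² λ(x) dx ≤ ε², and 0 ≤ γ ≤ ε², then the squared Hellinger distance between the density f_X(x) = exp(-Φ(x))λ(x)/z (where z = ∫exp(-Φ(x))λ(x)dx) and the density f̂(x) = (γ + g(x)²)λ(x)/ẑ (where ẑ = γ + ∫g(x)²λ(x)dx) satisfies D_H(f_X, f̂)² ≤ 4ε²/z. -/

import Mathlib

/-!
Put `u = √(e^{-Φ} λ)` and `v = √((γ + g²) λ)`, viewed in `L²`. The square roots of the two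
densities are `u / ‖u‖` and `v / ‖v‖`, and in any normed space
`‖u / ‖u‖ - v / ‖v‖‖ ≤ 2 ‖u - v‖ / ‖u‖`. Pointwise
`(e^{-Φ/2} - √(γ + g²))² ≤ (e^{-Φ/2} - g)² + γ`, so `‖u - v‖² ≤ ε² + γ ≤ 2 ε²`, while `‖u‖² = z`.
-/

open MeasureTheory Real

open NormedSpace in
theorem norm_normalize_sub_normalize_le {V : Type*} [NormedAddCommGroup V] [NormedSpace ℝ V]
    {x : V} (hx : x ≠ 0) (y : V) : ‖normalize x - normalize y‖ ≤ 2 * ‖x - y‖ / ‖x‖ := by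
  have hx' : 0 < ‖x‖ := norm_pos_iff.mpr hx
  have hscale : |‖x‖⁻¹ - ‖y‖⁻¹| * ‖y‖ ≤ ‖x - y‖ / ‖x‖ := by
    rcases eq_or_ne y 0 with rfl | hy
    · simp only [norm_zero, mul_zero]; positivity
    have hy' : 0 < ‖y‖ := norm_pos_iff.mpr hy
    rw [inv_sub_inv hx'.ne' hy'.ne', abs_div, abs_of_pos (mul_pos hx' hy'), div_mul_eq_mul_div,
      mul_div_mul_right _ _ hy'.ne', abs_sub_comm]
    gcongr
    exact abs_norm_sub_norm_le x y
  calc ‖normalize x - normalize y‖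
      = ‖‖x‖⁻¹ • (x - y) + (‖x‖⁻¹ - ‖y‖⁻¹) • y‖ := by
        rw [NormedSpace.normalize, NormedSpace.normalize, smul_sub, sub_smul]; abel_nf
    _ ≤ ‖x - y‖ / ‖x‖ + |‖x‖⁻¹ - ‖y‖⁻¹| * ‖y‖ := by
        refine (norm_add_le _ _).trans_eq ?_
        rw [norm_smul, norm_smul, norm_inv, norm_norm, Real.norm_eq_abs, inv_mul_eq_div]
    _ ≤ 2 * ‖x - y‖ / ‖x‖ := by rw [mul_div_assoc]; linarith

theorem sq_sqrt_mul_sub_sqrt_mul_le {a b γ l : ℝ} (ha : 0 ≤ a) (hγ : 0 ≤ γ) (hl : 0 ≤ l) :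
    (√(a ^ 2 * l) - √((γ + b ^ 2) * l)) ^ 2 ≤ ((a - b) ^ 2 + γ) * l := by
  have hbc : b ≤ √(γ + b ^ 2) :=
    (le_abs_self b).trans ((sqrt_sq_eq_abs b).symm.trans_le (sqrt_le_sqrt (by linarith)))
  rw [sqrt_mul (sq_nonneg a), sqrt_mul (by positivity), sqrt_sq ha, ← sub_mul, mul_pow,
    sq_sqrt hl]
  gcongr
  nlinarith [mul_le_mul_of_nonneg_left hbc ha, sq_sqrt (by positivity : 0 ≤ γ + b ^ 2)]

namespace MeasureTheory

variable {α : Type*} [MeasurableSpace α] {μ : Measure α}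

theorem MemLp.integral_sq_eq_norm_toLp_sq {f : α → ℝ} (hf : MemLp f 2 μ) :
    ∫ x, f x ^ 2 ∂μ = ‖hf.toLp f‖ ^ 2 := by
  rw [← real_inner_self_eq_norm_sq, L2.inner_def]
  refine integral_congr_ae (hf.coeFn_toLp.mono fun x hx => ?_)
  simp only [hx, real_inner_self_eq_norm_sq, Real.norm_eq_abs, sq_abs]

theorem Integrable.memLp_two_sqrt {f : α → ℝ} (hf : Integrable f μ) (hf_nonneg : 0 ≤ f) :
    MemLp (fun x => √(f x)) 2 μ :=
  (memLp_two_iff_integrable_sq (continuous_sqrt.comp_aestronglyMeasurable hf.1)).mpr <| by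
    simpa only [sq_sqrt (hf_nonneg _)] using hf

theorem integral_sq_div_sqrt_sub_div_sqrt_le {u v : α → ℝ} (hu : MemLp u 2 μ) (hv : MemLp v 2 μ)
    (hu_pos : 0 < ∫ x, u x ^ 2 ∂μ) :
    ∫ x, (u x / √(∫ y, u y ^ 2 ∂μ) - v x / √(∫ y, v y ^ 2 ∂μ)) ^ 2 ∂μ
      ≤ 4 * (∫ x, (u x - v x) ^ 2 ∂μ) / ∫ x, u x ^ 2 ∂μ := by
  set U := hu.toLp u
  set V := hv.toLp v
  have hw : MemLp (‖U‖⁻¹ • u - ‖V‖⁻¹ • v) 2 μ := (hu.const_smul _).sub (hv.const_smul _)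
  have hU : U ≠ 0 := by
    rw [hu.integral_sq_eq_norm_toLp_sq] at hu_pos
    exact norm_ne_zero_iff.mp (sq_pos_iff.mp hu_pos)
  have hw_toLp : hw.toLp _ = NormedSpace.normalize U - NormedSpace.normalize V := by
    rw [MemLp.toLp_sub (hu.const_smul _) (hv.const_smul _), MemLp.toLp_const_smul,
      MemLp.toLp_const_smul]
    rfl
  have hnorm_U : √(∫ x, u x ^ 2 ∂μ) = ‖U‖ := by
    rw [hu.integral_sq_eq_norm_toLp_sq, sqrt_sq (norm_nonneg _)]
  have hnorm_V : √(∫ x, v x ^ 2 ∂μ) = ‖V‖ := by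
    rw [hv.integral_sq_eq_norm_toLp_sq, sqrt_sq (norm_nonneg _)]
  have hdist : ∫ x, (u x - v x) ^ 2 ∂μ = ‖U - V‖ ^ 2 := by
    rw [← MemLp.toLp_sub]
    exact (hu.sub hv).integral_sq_eq_norm_toLp_sq
  calc ∫ x, (u x / √(∫ y, u y ^ 2 ∂μ) - v x / √(∫ y, v y ^ 2 ∂μ)) ^ 2 ∂μ
      = ∫ x, (‖U‖⁻¹ • u - ‖V‖⁻¹ • v) x ^ 2 ∂μ := by
        simp only [hnorm_U, hnorm_V, Pi.sub_apply, Pi.smul_apply, smul_eq_mul, div_eq_inv_mul]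
    _ = ‖NormedSpace.normalize U - NormedSpace.normalize V‖ ^ 2 := by
        rw [hw.integral_sq_eq_norm_toLp_sq, hw_toLp]
    _ ≤ (2 * ‖U - V‖ / ‖U‖) ^ 2 := by
        gcongr
        exact norm_normalize_sub_normalize_le hU V
    _ = 4 * (∫ x, (u x - v x) ^ 2 ∂μ) / ∫ x, u x ^ 2 ∂μ := by
        rw [hdist, hu.integral_sq_eq_norm_toLp_sq]
        ring

theorem integral_sq_sqrt_div_integral_sub_le {f h : α → ℝ} (hf : Integrable f μ)
    (hh : Integrable h μ) (hf_nonneg : 0 ≤ f) (hh_nonneg : 0 ≤ h) (hf_pos : 0 < ∫ x, f x ∂μ) :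
    ∫ x, (√(f x / ∫ y, f y ∂μ) - √(h x / ∫ y, h y ∂μ)) ^ 2 ∂μ
      ≤ 4 * (∫ x, (√(f x) - √(h x)) ^ 2 ∂μ) / ∫ x, f x ∂μ := by
  have key := integral_sq_div_sqrt_sub_div_sqrt_le (hf.memLp_two_sqrt hf_nonneg)
    (hh.memLp_two_sqrt hh_nonneg)
  simp only [sq_sqrt (hf_nonneg _), sq_sqrt (hh_nonneg _)] at key
  simpa only [sqrt_div (hf_nonneg _), sqrt_div (hh_nonneg _)] using key hf_pos

theorem integral_sq_sqrt_sub_sqrt_le {a g lam : α → ℝ} {γ : ℝ} (ha : 0 ≤ a) (hγ : 0 ≤ γ)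
    (hlam_nonneg : 0 ≤ lam) (hlam : Integrable lam μ)
    (h_int : Integrable (fun x => (a x - g x) ^ 2 * lam x) μ) :
    ∫ x, (√(a x ^ 2 * lam x) - √((γ + g x ^ 2) * lam x)) ^ 2 ∂μ
      ≤ ∫ x, (a x - g x) ^ 2 * lam x ∂μ + γ * ∫ x, lam x ∂μ := by
  rw [← integral_const_mul, ← integral_add h_int (hlam.const_mul γ)]
  refine integral_mono_of_nonneg (.of_forall fun x => sq_nonneg _) (h_int.add (hlam.const_mul γ))
    (.of_forall fun x => ?_)
  simpa only [add_mul] using sq_sqrt_mul_sub_sqrt_mul_le (ha x) hγ (hlam_nonneg x)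

end MeasureTheory

theorem stmt0_general {d : ℕ} (lam Φ g : (Fin d → ℝ) → ℝ) (ε γ z zhat : ℝ)
    (hlam_nonneg : ∀ x, 0 ≤ lam x)
    (hlam_prob : ∫ x, lam x = 1)
    (h_int1 : Integrable (fun x => Real.exp (-Φ x) * lam x))
    (h_int2 : Integrable (fun x => (g x)^2 * lam x))
    (h_int3 : Integrable (fun x => (Real.exp (-Φ x / 2) - g x)^2 * lam x))
    (hz : z = ∫ x, Real.exp (-Φ x) * lam x)
    (hzhat : zhat = γ + ∫ x, (g x)^2 * lam x)
    (hz_pos : 0 < z)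
    (happrox : ∫ x, (Real.exp (-Φ x / 2) - g x)^2 * lam x ≤ ε^2)
    (hγ0 : 0 ≤ γ) (hγε : γ ≤ ε^2) :
    (1/2) * (∫ x, (Real.sqrt (Real.exp (-Φ x) * lam x / z)
      - Real.sqrt ((γ + (g x)^2) * lam x / zhat))^2) ≤ 4 * ε^2 / z := by
  have hlam_int : Integrable lam := by
    by_contra h
    rw [integral_undef h] at hlam_prob
    exact zero_ne_one hlam_prob
  have hq_int : Integrable (fun x => (γ + g x ^ 2) * lam x) := by
    simp_rw [add_mul]
    exact (hlam_int.const_mul γ).add h_int2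
  have hzhat_eq : zhat = ∫ x, (γ + g x ^ 2) * lam x := by
    simp only [add_mul, integral_add (hlam_int.const_mul γ) h_int2, integral_const_mul, hlam_prob,
      mul_one, hzhat]
  have hexp : ∀ x, exp (-Φ x) = exp (-Φ x / 2) ^ 2 := fun x => by
    rw [← exp_nat_mul]; ring_nf
  have hdist := integral_sq_sqrt_sub_sqrt_le (fun x => (exp_pos (-Φ x / 2)).le) hγ0 hlam_nonneg
    hlam_int h_int3
  have hhell := integral_sq_sqrt_div_integral_sub_le h_int1 hq_int
    (fun x => mul_nonneg (exp_pos _).le (hlam_nonneg x))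
    (fun x => mul_nonneg (by positivity) (hlam_nonneg x)) (hz ▸ hz_pos)
  rw [← hz, ← hzhat_eq] at hhell
  simp only [← hexp, hlam_prob, mul_one] at hdist
  calc (1/2) * (∫ x, (√(exp (-Φ x) * lam x / z) - √((γ + g x ^ 2) * lam x / zhat)) ^ 2)
      ≤ (1/2) * (4 * (ε ^ 2 + γ) / z) := by
        gcongr
        exact hhell.trans (by gcongr; linarith)
    _ ≤ 4 * ε ^ 2 / z := by
        rw [← mul_div_assoc]
        exact div_le_div_of_nonneg_right (by linarith) hz_pos.le

theorem stmt0 {d : ℕ} (lam Φ g : (Fin d → ℝ) → ℝ) (ε γ z zhat : ℝ)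
    (hlam_nonneg : ∀ x, 0 ≤ lam x)
    (hlam_prob : ∫ x, lam x = 1)
    (hΦ_meas : Measurable Φ) (hg_meas : Measurable g) (hlam_meas : Measurable lam)
    (h_int1 : Integrable (fun x => Real.exp (-Φ x) * lam x))
    (h_int2 : Integrable (fun x => (g x)^2 * lam x))
    (h_int3 : Integrable (fun x => (Real.exp (-Φ x / 2) - g x)^2 * lam x))
    (hz : z = ∫ x, Real.exp (-Φ x) * lam x)
    (hzhat : zhat = γ + ∫ x, (g x)^2 * lam x)
    (hz_pos : 0 < z)
    (happrox : ∫ x, (Real.exp (-Φ x / 2) - g x)^2 * lam x ≤ ε^2)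
    (hγ0 : 0 ≤ γ) (hγε : γ ≤ ε^2) :
    (1/2) * (∫ x, (Real.sqrt (Real.exp (-Φ x) * lam x / z)
      - Real.sqrt ((γ + (g x)^2) * lam x / zhat))^2) ≤ 4 * ε^2 / z :=
  stmt0_general lam Φ g ε γ z zhat hlam_nonneg hlam_prob h_int1 h_int2 h_int3 hz hzhat hz_pos
    happrox hγ0 hγε
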